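/- Fix 0 < ε = 1/N < 1/2 and α ∈ (0,1) with N^α an integer. Let X̃_x = X_x − X_x(α), where X_x(t) = μ(A_{ε^t}(x)). Then E[X̃_x²] = E[X̃_x X_x] = (1−α) log N for x ∈ X_ε, and for x ≠ x': E[X̃_x X_{x'}] = (q(x,x') − α) log N + O(1) if α < q(x,x') ≤ 1, and E[X̃_x X_{x'}] = 0 if 0 ≤ q(x,x') ≤ α, where q(x,x') = −log‖x−x'‖/log N. -/

import Mathlib

open MeasureTheory ProbabilityTheory

/-- Distance on the circle `[0,1]_∼`. -/
noncomputable def circDist (x y : ℝ) : ℝ := min |x - y| (1 - |x - y|)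

/-- The width profile `f(y) = y` for `y < 1/2` and `f(y) = 1/2` otherwise. -/
noncomputable def coneF (y : ℝ) : ℝ := if y < 1 / 2 then y else 1 / 2

/-- The cone-like subset `A_u(x)` of the half-cylinder `[0,1]_∼ × (0,∞)`. -/
def coneSet (u x : ℝ) : Set (ℝ × ℝ) :=
  {p | p.1 ∈ Set.Ico (0 : ℝ) 1 ∧ u ≤ p.2 ∧ circDist p.1 x ≤ coneF p.2 / 2}

/-- The overlap `q(x,x') = −log‖x−x'‖ / log N`. -/
noncomputable def overlap (N : ℕ) (x x' : ℝ) : ℝ := -Real.log (circDist x x') / Real.log N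

/-!
Fubini writes the `θ`-measure of `(A_ε(x) \ A_{ε'}(x)) ∩ A_ε(x')` as `∫_ε^{ε'} ℓ(y) / y² dy`,
where `ℓ(y)` is the length of its slice at height `y`. For `y < 1/2` that slice is the
intersection of two arcs of radius `y/2` about `x` and `x'` on `ℝ/ℤ`; arcs of radius below a
quarter period cannot meet the long way round, so `ℓ(y) = (y - d)₊` with `d` the circular
distance of `x` and `x'`. Hence the covariance is `0` when `d ≥ ε'`, and otherwise
`log (ε' / b) + d / ε' - d / b` with `b = max d ε`. With `ε = 1/N`, `ε' = N^{-α}` and `d ≥ 1/N`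
for distinct grid points this is `(1 - α) log N` on the diagonal and
`(q - α) log N + (d / ε' - 1)` off it.
-/

open Set Metric

theorem Real.volume_closedBall_inter_closedBall (a b r : ℝ) :
    volume (closedBall a r ∩ closedBall b r) = ENNReal.ofReal (2 * r - dist a b) := by
  rw [Real.closedBall_eq_Icc, Real.closedBall_eq_Icc, Icc_inter_Icc, Real.volume_Icc, Real.dist_eq,
    ← max_sub_min_eq_abs b a]
  simp only [min_add_add_right, max_sub_sub_right, max_comm b, min_comm b]
  ring_nf

namespace AddCircle

variable {T : ℝ} [hT : Fact (0 < T)]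

theorem exists_coe_eq_abs_le (z : AddCircle T) : ∃ t : ℝ, (t : AddCircle T) = z ∧ |t| ≤ T / 2 := by
  refine ⟨equivIoc T (-(T / 2)) z, coe_equivIoc, ?_⟩
  obtain ⟨h1, h2⟩ := (equivIoc T (-(T / 2)) z).2
  exact abs_le.2 ⟨h1.le, by linarith⟩

theorem norm_coe_eq_abs_of_le_half_period {v : ℝ} (hv : |v| ≤ T / 2) :
    ‖(v : AddCircle T)‖ = |v| :=
  (norm_coe_eq_abs_iff T hT.out.ne').2 (by rwa [abs_of_pos hT.out])

theorem norm_coe_eq_abs_of_norm_lt {v : ℝ} (hv : |v| < 3 * T / 4)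
    (h : ‖(v : AddCircle T)‖ < T / 4) :
    ‖(v : AddCircle T)‖ = |v| := by
  rw [norm_eq] at h ⊢
  obtain hn | hn := eq_or_ne (round (T⁻¹ * v)) 0
  · simp [hn]
  have h1 : (1 : ℝ) ≤ |(round (T⁻¹ * v) : ℝ)| := by exact_mod_cast Int.one_le_abs hn
  have h2 : T ≤ |round (T⁻¹ * v) * T| := by
    rw [abs_mul, abs_of_pos hT.out]; nlinarith [hT.out]
  have := abs_sub_abs_le_abs_sub (round (T⁻¹ * v) * T) v
  rw [abs_sub_comm] at this
  linarith

theorem volume_closedBall_zero_inter_closedBall {z : AddCircle T} {r : ℝ} (hr : r < T / 4) :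
    volume (closedBall 0 r ∩ closedBall z r) = ENNReal.ofReal (2 * r - ‖z‖) := by
  obtain ⟨t, rfl, ht⟩ := exists_coe_eq_abs_le z
  have hpre : ((↑) : ℝ → AddCircle T) ⁻¹' (closedBall 0 r ∩ closedBall ↑t r) ∩
      Ioc (-(T / 2)) (-(T / 2) + T) = closedBall 0 r ∩ closedBall t r := by
    ext u
    simp only [mem_inter_iff, mem_preimage, mem_closedBall, dist_eq_norm, sub_zero,
      Real.norm_eq_abs, ← AddCircle.coe_sub, mem_Ioc]
    constructor
    · rintro ⟨⟨hu, hut⟩, hu1, hu2⟩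
      rw [norm_coe_eq_abs_of_le_half_period (abs_le.2 ⟨hu1.le, by linarith⟩)] at hu
      have hut' : |u - t| < 3 * T / 4 := (abs_sub _ _).trans_lt (by linarith)
      exact ⟨hu, norm_coe_eq_abs_of_norm_lt hut' (by linarith) ▸ hut⟩
    · rintro ⟨hu, hut⟩
      obtain ⟨hu1, hu2⟩ := abs_le.1 hu
      refine ⟨⟨?_, QuotientAddGroup.norm_mk_le_norm.trans hut⟩, by linarith, by linarith⟩
      rwa [norm_coe_eq_abs_of_le_half_period (hu.trans (by linarith [hT.out]))]
  rw [add_projection_respects_measure T (-(T / 2))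
      (measurableSet_closedBall.inter measurableSet_closedBall), hpre,
    Real.volume_closedBall_inter_closedBall, dist_zero_left, Real.norm_eq_abs,
    norm_coe_eq_abs_of_le_half_period ht]

theorem volume_closedBall_inter_closedBall {x y : AddCircle T} {r : ℝ} (hr : r < T / 4) :
    volume (closedBall x r ∩ closedBall y r) = ENNReal.ofReal (2 * r - dist x y) := by
  rw [← measure_preimage_add _ x, preimage_inter, preimage_add_closedBall, preimage_add_closedBall,
    sub_self, volume_closedBall_zero_inter_closedBall hr, dist_comm, dist_eq_norm]

end AddCircle

theorem UnitAddCircle.norm_coe_eq_min {u : ℝ} (h0 : 0 ≤ u) (h1 : u ≤ 1) :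
    ‖(u : UnitAddCircle)‖ = min u (1 - u) := by
  rcases le_total u (1 / 2) with h2 | h2
  · rw [AddCircle.norm_coe_eq_abs_of_le_half_period (abs_le.2 ⟨by linarith, by linarith⟩),
      abs_of_nonneg h0, min_eq_left (by linarith)]
  · conv_lhs => rw [← sub_add_cancel u 1, AddCircle.coe_add_period]
    rw [AddCircle.norm_coe_eq_abs_of_le_half_period (abs_le.2 ⟨by linarith, by linarith⟩),
      abs_of_nonpos (by linarith), min_eq_right (by linarith), neg_sub]

theorem circDist_eq_dist {s x : ℝ} (h : |s - x| ≤ 1) :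
    circDist s x = dist (s : UnitAddCircle) x := by
  have hneg : ‖((s - x : ℝ) : UnitAddCircle)‖ = ‖((|s - x| : ℝ) : UnitAddCircle)‖ := by
    rcases abs_choice (s - x) with h | h <;> rw [h]
    rw [AddCircle.coe_neg, norm_neg]
  rw [dist_eq_norm, ← AddCircle.coe_sub, hneg, UnitAddCircle.norm_coe_eq_min (abs_nonneg _) h,
    circDist]

theorem circDist_self (x : ℝ) : circDist x x = 0 := by
  simp [circDist]

theorem continuous_circDist_left (y : ℝ) : Continuous fun s => circDist s y := by
  unfold circDist; fun_prop

theorem coneF_eq_min (y : ℝ) : coneF y = min y (1 / 2) := by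
  unfold coneF; split_ifs with h
  · exact (min_eq_left h.le).symm
  · exact (min_eq_right (not_lt.1 h)).symm

theorem measurableSet_coneSet (u x : ℝ) : MeasurableSet (coneSet u x) := by
  have hF : Measurable fun p : ℝ × ℝ => coneF p.2 / 2 := by
    simp only [coneF_eq_min]; fun_prop
  exact (measurable_fst measurableSet_Ico).inter <|
    (measurableSet_le measurable_const measurable_snd).inter <|
    measurableSet_le ((continuous_circDist_left x).measurable.comp measurable_fst) hF

theorem abs_sub_le_one_of_mem_Ico {a b : ℝ} (ha : a ∈ Ico (0 : ℝ) 1) (hb : b ∈ Ico (0 : ℝ) 1) :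
    |a - b| ≤ 1 :=
  abs_sub_le_iff.2 ⟨by linarith [ha.2, hb.1], by linarith [ha.1, hb.2]⟩

theorem volume_setOf_circDist_le_and_le {x x' r : ℝ} (hx : x ∈ Ico (0 : ℝ) 1)
    (hx' : x' ∈ Ico (0 : ℝ) 1) (hr : r < 1 / 4) :
    volume {s | s ∈ Ico (0 : ℝ) 1 ∧ circDist s x ≤ r ∧ circDist s x' ≤ r}
      = ENNReal.ofReal (2 * r - circDist x x') := by
  set B : Set UnitAddCircle := closedBall (x : UnitAddCircle) r ∩ closedBall (x' : UnitAddCircle) r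
  have hset : {s | s ∈ Ico (0 : ℝ) 1 ∧ circDist s x ≤ r ∧ circDist s x' ≤ r}
      = (↑) ⁻¹' B ∩ Ico 0 1 := by
    ext s
    by_cases hs : s ∈ Ico (0 : ℝ) 1
    · simp only [B, mem_ofPred_eq, mem_inter_iff, mem_preimage, mem_closedBall, hs, true_and,
        and_true, circDist_eq_dist (abs_sub_le_one_of_mem_Ico hs hx),
        circDist_eq_dist (abs_sub_le_one_of_mem_Ico hs hx')]
    · simp only [mem_ofPred_eq, mem_inter_iff, hs, false_and, and_false]
  have hB := AddCircle.add_projection_respects_measure 1 0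
    (measurableSet_closedBall.inter measurableSet_closedBall : MeasurableSet B)
  rw [zero_add] at hB
  rw [hset, ← Measure.restrict_apply' measurableSet_Ico, restrict_Ico_eq_restrict_Ioc,
    Measure.restrict_apply' measurableSet_Ioc, ← hB,
    AddCircle.volume_closedBall_inter_closedBall hr,
    ← circDist_eq_dist (abs_sub_le_one_of_mem_Ico hx hx')]

theorem setIntegral_comp_snd_eq_integral_measureReal_mul {α β : Type*} [MeasurableSpace α]
    [MeasurableSpace β] {μ : Measure α} {ν : Measure β} [SFinite μ] [SFinite ν]
    {S : Set (α × β)} (hS : MeasurableSet S) {g : β → ℝ}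
    (hg : IntegrableOn (fun p => g p.2) S (μ.prod ν)) :
    ∫ p in S, g p.2 ∂μ.prod ν = ∫ y, μ.real {x | (x, y) ∈ S} * g y ∂ν := by
  rw [← integral_indicator hS, integral_prod_symm _ (hg.integrable_indicator hS)]
  congr 1 with y
  have hslice : (fun x => S.indicator (fun p => g p.2) (x, y))
      = {x | (x, y) ∈ S}.indicator fun _ => g y := by
    ext x
    by_cases h : (x, y) ∈ S <;> simp [h]
  rw [hslice]
  exact integral_indicator_const (g y) (measurable_prodMk_right hS)

theorem intervalIntegrable_max_sub_zero_div_sq {a b : ℝ} (d : ℝ) (ha : 0 < a) (hb : 0 < b) :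
    IntervalIntegrable (fun y => max (y - d) 0 / y ^ 2) volume a b := by
  refine ContinuousOn.intervalIntegrable (ContinuousOn.div (by fun_prop) (by fun_prop) ?_)
  intro y hy
  have : 0 < y := by rcases mem_uIcc.1 hy with h | h <;> linarith [h.1]
  positivity

theorem integral_max_sub_zero_div_sq_of_le {a c d : ℝ} (hac : a ≤ c) (hcd : c ≤ d) :
    ∫ y in a..c, max (y - d) 0 / y ^ 2 = 0 := by
  refine (intervalIntegral.integral_congr fun y hy => ?_).trans intervalIntegral.integral_zero
  rw [uIcc_of_le hac] at hy
  simp only [max_eq_right (by linarith [hy.2] : y - d ≤ 0), zero_div]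

theorem integral_max_sub_zero_div_sq {a c d : ℝ} (ha : 0 < a) (hc : max d a ≤ c) :
    ∫ y in a..c, max (y - d) 0 / y ^ 2
      = Real.log c + d / c - (Real.log (max d a) + d / max d a) := by
  set b := max d a
  have hb : 0 < b := lt_max_of_lt_right ha
  have hlow : ∫ y in a..b, max (y - d) 0 / y ^ 2 = 0 := by
    rcases le_total d a with h | h
    · rw [show b = a from max_eq_right h, intervalIntegral.integral_same]
    · exact integral_max_sub_zero_div_sq_of_le (le_max_right d a) (max_eq_left h).le
  rw [← intervalIntegral.integral_add_adjacent_intervals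
    (intervalIntegrable_max_sub_zero_div_sq d ha hb)
    (intervalIntegrable_max_sub_zero_div_sq d hb (hb.trans_le hc)), hlow, zero_add]
  refine intervalIntegral.integral_eq_sub_of_hasDerivAt (f := fun y => Real.log y + d / y)
    (fun y hy => ?_)
    (intervalIntegrable_max_sub_zero_div_sq d hb (hb.trans_le hc))
  rw [uIcc_of_le hc] at hy
  have hy0 : y ≠ 0 := (hb.trans_le hy.1).ne'
  convert (Real.hasDerivAt_log hy0).add ((hasDerivAt_inv hy0).const_mul d) using 1
  · ext z; simp [div_eq_mul_inv]
  · rw [max_eq_left (by linarith [le_max_left d a, hy.1])]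
    field_simp
    ring

section ConeRegion

variable {ε ε' x x' : ℝ}

theorem mem_coneSet_diff_inter_iff (hε' : ε' ≤ 1 / 2) {s y : ℝ} :
    (s, y) ∈ (coneSet ε x \ coneSet ε' x) ∩ coneSet ε x' ↔
      y ∈ Ico ε ε' ∧ s ∈ Ico (0 : ℝ) 1 ∧ circDist s x ≤ y / 2 ∧ circDist s x' ≤ y / 2 := by
  simp only [coneSet, mem_inter_iff, mem_sdiff, mem_ofPred_eq, mem_Ico]
  constructor
  · rintro ⟨⟨⟨hs, hεy, hx⟩, hn⟩, -, -, hx'⟩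
    have hy : y < ε' := not_le.1 fun h => hn ⟨hs, h, hx⟩
    have hF : coneF y = y := if_pos (by linarith)
    rw [hF] at hx hx'
    exact ⟨⟨hεy, hy⟩, hs, hx, hx'⟩
  · rintro ⟨⟨hεy, hy⟩, hs, hx, hx'⟩
    have hF : coneF y = y := if_pos (by linarith)
    rw [← hF] at hx hx'
    exact ⟨⟨⟨hs, hεy, hx⟩, fun h => h.2.1.not_gt hy⟩, hs, hεy, hx'⟩

theorem volume_coneSet_diff_inter_slice (hx : x ∈ Ico (0 : ℝ) 1) (hx' : x' ∈ Ico (0 : ℝ) 1)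
    (hε' : ε' ≤ 1 / 2) (y : ℝ) :
    volume {s | (s, y) ∈ (coneSet ε x \ coneSet ε' x) ∩ coneSet ε x'}
      = (Ico ε ε').indicator (fun y => ENNReal.ofReal (y - circDist x x')) y := by
  simp_rw [mem_coneSet_diff_inter_iff hε']
  by_cases hy : y ∈ Ico ε ε'
  · simp only [hy, true_and, indicator_of_mem]
    rw [volume_setOf_circDist_le_and_le hx hx' (by linarith [hy.2]), mul_div_cancel₀ _ two_ne_zero]
  · simp [hy]

theorem integrableOn_coneSet_diff_inter (hε : 0 < ε) (hε' : ε' ≤ 1 / 2) :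
    IntegrableOn (fun p : ℝ × ℝ => 1 / p.2 ^ 2) ((coneSet ε x \ coneSet ε' x) ∩ coneSet ε x') := by
  have hsub : (coneSet ε x \ coneSet ε' x) ∩ coneSet ε x' ⊆ Icc 0 1 ×ˢ Icc ε ε' := by
    rintro ⟨s, y⟩ h
    obtain ⟨⟨hεy, hy⟩, ⟨hs0, hs1⟩, -⟩ := (mem_coneSet_diff_inter_iff hε').1 h
    exact ⟨⟨hs0, hs1.le⟩, hεy, hy.le⟩
  refine (ContinuousOn.integrableOn_compact (isCompact_Icc.prod isCompact_Icc) ?_).mono_set hsub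
  refine continuousOn_const.div (by fun_prop) fun p hp => ?_
  have : 0 < p.2 := hε.trans_le hp.2.1
  positivity

theorem setIntegral_coneSet_diff_inter (hx : x ∈ Ico (0 : ℝ) 1) (hx' : x' ∈ Ico (0 : ℝ) 1)
    (hε : 0 < ε) (hεε' : ε ≤ ε') (hε' : ε' ≤ 1 / 2) :
    ∫ p in (coneSet ε x \ coneSet ε' x) ∩ coneSet ε x', 1 / p.2 ^ 2
      = ∫ y in ε..ε', max (y - circDist x x') 0 / y ^ 2 := by
  have hS := ((measurableSet_coneSet ε x).diff (measurableSet_coneSet ε' x)).inter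
    (measurableSet_coneSet ε x')
  rw [Measure.volume_eq_prod, setIntegral_comp_snd_eq_integral_measureReal_mul
    (g := fun y => 1 / y ^ 2) hS (integrableOn_coneSet_diff_inter hε hε'),
    intervalIntegral.integral_of_le hεε', ← restrict_Ico_eq_restrict_Ioc,
    ← integral_indicator measurableSet_Ico]
  congr 1 with y
  rw [measureReal_def, volume_coneSet_diff_inter_slice hx hx' hε']
  by_cases hy : y ∈ Ico ε ε' <;> simp [hy, ENNReal.toReal_ofReal', div_eq_mul_inv]

end ConeRegion

theorem natCast_div_mem_Ico {N : ℕ} (i : Fin N) : (i : ℝ) / N ∈ Ico (0 : ℝ) 1 :=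
  ⟨by positivity, (div_lt_one (Nat.cast_pos.2 i.pos)).2 (by exact_mod_cast i.isLt)⟩

theorem one_div_le_circDist_of_ne {N : ℕ} {i j : Fin N} (hij : i ≠ j) :
    1 / (N : ℝ) ≤ circDist ((i : ℝ) / N) ((j : ℝ) / N) := by
  have hN : (0 : ℝ) < N := Nat.cast_pos.2 i.pos
  have hi : (i : ℝ) + 1 ≤ N := by exact_mod_cast i.isLt
  have hj : (j : ℝ) + 1 ≤ N := by exact_mod_cast j.isLt
  have hsep : 1 ≤ |(i : ℝ) - j| := by
    rcases lt_or_gt_of_ne (Fin.val_ne_of_ne hij) with h | h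
    · have : (i : ℝ) + 1 ≤ j := by exact_mod_cast h
      exact le_abs.2 (Or.inr (by linarith))
    · have : (j : ℝ) + 1 ≤ i := by exact_mod_cast h
      exact le_abs.2 (Or.inl (by linarith))
  have hfar : |(i : ℝ) - j| ≤ N - 1 := abs_sub_le_iff.2 ⟨by linarith, by linarith⟩
  rw [circDist, ← sub_div, abs_div, abs_of_pos hN, le_min_iff, le_sub_comm, one_sub_div hN.ne']
  exact ⟨by gcongr, by gcongr⟩

section Scale

variable {N : ℕ} {α : ℝ}

theorem log_one_div_rpow (hN : 0 < N) (α : ℝ) : Real.log ((1 / N : ℝ) ^ α) = -α * Real.log N := by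
  rw [Real.log_rpow (by positivity), one_div, Real.log_inv, mul_neg, neg_mul]

theorem one_div_lt_one_div_rpow (hN : 1 < N) (hα : α < 1) : (1 / N : ℝ) < (1 / N) ^ α := by
  have hN' : (1 : ℝ) < N := by exact_mod_cast hN
  simpa using Real.rpow_lt_rpow_of_exponent_gt (by positivity) ((div_lt_one (by linarith)).2 hN') hα

theorem one_div_rpow_le_half (hN : 1 < N) (hα : 0 < α) {m : ℕ} (hm : (m : ℝ) = (N : ℝ) ^ α) :
    (1 / N : ℝ) ^ α ≤ 1 / 2 := by
  have hN' : (1 : ℝ) < N := by exact_mod_cast hN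
  have hm1 : 1 < m := by exact_mod_cast hm ▸ Real.one_lt_rpow hN' hα
  have hm2 : (2 : ℝ) ≤ m := by exact_mod_cast hm1
  rw [Real.div_rpow zero_le_one (by positivity), Real.one_rpow, ← hm]
  gcongr

theorem overlap_sub_mul_log (hN : 1 < N) (x x' : ℝ) :
    (overlap N x x' - α) * Real.log N
      = Real.log ((1 / N : ℝ) ^ α) - Real.log (circDist x x') := by
  have hlog : Real.log N ≠ 0 := (Real.log_pos (by exact_mod_cast hN)).ne'
  rw [log_one_div_rpow (by omega), overlap, sub_mul, div_mul_cancel₀ _ hlog]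
  ring

theorem lt_overlap_iff (hN : 1 < N) {x x' : ℝ} (hd : 0 < circDist x x') :
    α < overlap N x x' ↔ circDist x x' < (1 / N : ℝ) ^ α := by
  have hlog : 0 < Real.log N := Real.log_pos (by exact_mod_cast hN)
  rw [← sub_pos, ← mul_pos_iff_of_pos_right hlog, overlap_sub_mul_log hN, sub_pos,
    Real.log_lt_log_iff hd (by positivity)]

end Scale

theorem abs_integral_max_sub_zero_div_sq_sub_log_le {ε ε' d : ℝ} (hε : 0 < ε) (hεd : ε ≤ d)
    (hdε' : d ≤ ε') :
    |(∫ y in ε..ε', max (y - d) 0 / y ^ 2) - (Real.log ε' - Real.log d)| ≤ 1 := by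
  have hd : 0 < d := hε.trans_le hεd
  rw [integral_max_sub_zero_div_sq hε (max_le hdε' (hεd.trans hdε')), max_eq_left hεd,
    div_self hd.ne', abs_le]
  have h0 : 0 ≤ d / ε' := div_nonneg hd.le (hd.le.trans hdε')
  have h1 : d / ε' ≤ 1 := (div_le_one (hd.trans_le hdε')).2 hdε'
  constructor <;> linarith

/-- Covariances of the increment field `X̃_x = X_x − X_x(α)`: there is a constant `C`
(uniform in `N`) such that whenever the second moments of `(X̃, X)` are given by the
`θ`-measure of the corresponding cone regions, one has `E[X̃_x²] = E[X̃_x X_x] = (1−α) log N`,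
`|E[X̃_x X_{x'}] − (q(x,x')−α) log N| ≤ C` if `α < q(x,x') ≤ 1`, and `E[X̃_x X_{x'}] = 0`
if `q(x,x') ≤ α`. -/
theorem stmt4 : ∃ C : ℝ, ∀ (N : ℕ), 2 < N → ∀ α ∈ Set.Ioo (0 : ℝ) 1,
    (∃ m : ℕ, (m : ℝ) = (N : ℝ) ^ α) →
    ∀ (Ω : Type) [MeasurableSpace Ω] (P : Measure Ω) [IsProbabilityMeasure P]
      (X Xt : ℝ → Ω → ℝ),
    (∀ x : ℝ, ∫ ω, (Xt x ω) ^ 2 ∂P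
        = ∫ p in coneSet (1 / N) x \ coneSet ((1 / N : ℝ) ^ α) x, 1 / p.2 ^ 2) →
    (∀ x x' : ℝ, ∫ ω, Xt x ω * X x' ω ∂P
        = ∫ p in (coneSet (1 / N) x \ coneSet ((1 / N : ℝ) ^ α) x) ∩ coneSet (1 / N) x',
            1 / p.2 ^ 2) →
    (∀ i : Fin N,
        (∫ ω, (Xt ((i : ℝ) / N) ω) ^ 2 ∂P = (1 - α) * Real.log N) ∧
        ∫ ω, Xt ((i : ℝ) / N) ω * X ((i : ℝ) / N) ω ∂P = (1 - α) * Real.log N) ∧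
    (∀ i j : Fin N, i ≠ j →
        (α < overlap N ((i : ℝ) / N) ((j : ℝ) / N) →
          |(∫ ω, Xt ((i : ℝ) / N) ω * X ((j : ℝ) / N) ω ∂P)
              - (overlap N ((i : ℝ) / N) ((j : ℝ) / N) - α) * Real.log N| ≤ C) ∧
        (overlap N ((i : ℝ) / N) ((j : ℝ) / N) ≤ α →
          ∫ ω, Xt ((i : ℝ) / N) ω * X ((j : ℝ) / N) ω ∂P = 0)) := by
  refine ⟨1, fun N hN α ⟨hα0, hα1⟩ ⟨m, hm⟩ Ω _ P _ X Xt hXt hXtX => ?_⟩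
  have hN1 : 1 < N := by omega
  have hε : (0 : ℝ) < 1 / N := by positivity
  have hεε' := one_div_lt_one_div_rpow hN1 hα1
  have hcov : ∀ x x', x ∈ Ico (0 : ℝ) 1 → x' ∈ Ico (0 : ℝ) 1 → ∫ ω, Xt x ω * X x' ω ∂P
      = ∫ y in (1 / N : ℝ)..(1 / N) ^ α, max (y - circDist x x') 0 / y ^ 2 := fun x x' hx hx' =>
    (hXtX x x').trans (setIntegral_coneSet_diff_inter hx hx' hε hεε'.le
      (one_div_rpow_le_half hN1 hα0 hm))
  refine ⟨fun i => ?_, fun i j hij => ?_⟩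
  · have hx := natCast_div_mem_Ico i
    have hdiag : ∫ ω, Xt ((i : ℝ) / N) ω * X ((i : ℝ) / N) ω ∂P = (1 - α) * Real.log N := by
      rw [hcov _ _ hx hx, circDist_self,
        integral_max_sub_zero_div_sq hε (max_le (hε.trans hεε').le hεε'.le),
        max_eq_right hε.le, log_one_div_rpow (by omega), one_div, Real.log_inv]
      ring
    refine ⟨?_, hdiag⟩
    rw [hXt, ← hdiag, hXtX, inter_eq_left.2 sdiff_subset]
  have hd := one_div_le_circDist_of_ne hij
  have hd0 := hε.trans_le hd
  rw [hcov _ _ (natCast_div_mem_Ico i) (natCast_div_mem_Ico j), overlap_sub_mul_log hN1]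
  exact ⟨fun hq =>
      abs_integral_max_sub_zero_div_sq_sub_log_le hε hd ((lt_overlap_iff hN1 hd0).1 hq).le,
    fun hq => integral_max_sub_zero_div_sq_of_le hεε'.le
      (not_lt.1 ((lt_overlap_iff hN1 hd0).not.1 (not_lt.2 hq)))⟩
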